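/- arXiv:2507.21646 — 7 statements merged into one kernel-verified Lean document; each statement's English description precedes it below -/
import Mathlib

section
/- Let K be a closed subset of a real Hilbert space H, let y ∈ H \ K, and suppose x ∈ Proj_K(y). Then for every t ∈ (0,1), the point x + t(y−x) has x as its unique nearest point in K, i.e. Proj_K(x + t(y−x)) = {x}. -/
open Metric Set
open scoped RealInnerProductSpace

variable {H : Type*} [NormedAddCommGroup H] [InnerProductSpace ℝ H]

/-- The set of nearest points of `K` to `y`. -/
noncomputable def projSet (K : Set H) (y : H) : Set H :=
  {x | x ∈ K ∧ ‖x - y‖ = Metric.infDist y K}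

/-- The proximal normal cone to `K` at `x`. -/
def proxNormalCone (K : Set H) (x : H) : Set H :=
  {u | ∃ l : ℝ, 0 ≤ l ∧ ∃ y : H, x ∈ projSet K y ∧ u = l • (y - x)}

/-- `K` is `r`-prox-regular. -/
def IsProxRegular (r : ℝ) (K : Set H) : Prop :=
  ∀ y : H, 0 < Metric.infDist y K → Metric.infDist y K < r →
    (projSet K y).Nonempty ∧
      ∀ x ∈ projSet K y, x ∈ projSet K (x + (r / ‖y - x‖) • (y - x))

/-- The excess of `A` over `B`: `e(A,B) = sup_{a ∈ A} d(a,B)`. -/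
noncomputable def excess (A B : Set H) : ENNReal := ⨆ a ∈ A, EMetric.infEdist a B

theorem stmt_2 [CompleteSpace H] (K : Set H) (hK : IsClosed K) (hKne : K.Nonempty)
    (y : H) (hy : y ∉ K) (x : H) (hx : x ∈ projSet K y)
    (t : ℝ) (ht : t ∈ Set.Ioo (0 : ℝ) 1) :
    projSet K (x + t • (y - x)) = {x} := by
  obtain ⟨hxK, hxd⟩ := hx
  obtain ⟨ht0, ht1⟩ := ht
  set z := x + t • (y - x) with hz
  have hd0 : 0 < Metric.infDist y K := (hK.notMem_iff_infDist_pos hKne).mp hy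
  have hyx0 : (0:ℝ) < ‖y - x‖ := by
    rw [← hxd] at hd0; rwa [norm_sub_rev] at hd0
  have hxz : ‖x - z‖ = t * ‖y - x‖ := by
    have : x - z = (-t) • (y - x) := by rw [hz]; module
    rw [this, norm_smul]
    simp [abs_of_pos ht0]
  have hzy : ‖z - y‖ = (1 - t) * ‖y - x‖ := by
    have : z - y = (t - 1) • (y - x) := by rw [hz]; module
    rw [this, norm_smul]
    rw [Real.norm_eq_abs, abs_of_neg (by linarith)]
    ring
  have key : ∀ w ∈ K, t * ‖y - x‖ ≤ dist z w := by
    intro w hw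
    have h1 : ‖y - x‖ ≤ ‖w - y‖ := by
      rw [norm_sub_rev y x, hxd]
      have := Metric.infDist_le_dist_of_mem (x := y) hw
      rwa [dist_eq_norm, norm_sub_rev] at this
    have h2 : ‖w - y‖ ≤ ‖w - z‖ + ‖z - y‖ := by
      have := norm_add_le (w - z) (z - y)
      simpa using this
    rw [dist_eq_norm, norm_sub_rev z w]
    nlinarith
  have hinf : Metric.infDist z K = t * ‖y - x‖ := by
    refine le_antisymm ?_ ?_
    swap
    · by_contra h
      push_neg at h
      obtain ⟨w, hwK, hww⟩ := (Metric.infDist_lt_iff hKne).mp h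
      exact absurd hww (not_lt.mpr (key w hwK))
    calc Metric.infDist z K ≤ dist z x := Metric.infDist_le_dist_of_mem hxK
    _ = t * ‖y - x‖ := by rw [dist_eq_norm, norm_sub_rev, hxz]
  have hxmem : x ∈ projSet K z := ⟨hxK, hxz.trans hinf.symm⟩
  ext w
  simp only [Set.mem_singleton_iff]
  constructor
  · rintro ⟨hwK, hwd⟩
    rw [hinf] at hwd
    -- equality in triangle inequality
    have h1 : ‖y - x‖ ≤ ‖w - y‖ := by
      rw [norm_sub_rev y x, hxd]
      have := Metric.infDist_le_dist_of_mem (x := y) hwK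
      rwa [dist_eq_norm, norm_sub_rev] at this
    have h2 : ‖w - y‖ ≤ ‖w - z‖ + ‖z - y‖ := by
      have := norm_add_le (w - z) (z - y)
      simpa using this
    have heq : ‖(w - z) + (z - y)‖ = ‖w - z‖ + ‖z - y‖ := by
      have : (w - z) + (z - y) = w - y := by abel
      rw [this]
      nlinarith
    have hray : SameRay ℝ (w - z) (z - y) := sameRay_iff_norm_add.mpr heq
    have hzy0 : z - y ≠ 0 := by
      intro h
      rw [h, norm_zero] at hzy
      nlinarith
    obtain ⟨c, hc0, hc⟩ := hray.exists_nonneg_right hzy0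
    have hnorm : ‖w - z‖ = c * ((1 - t) * ‖y - x‖) := by
      rw [hc, norm_smul, Real.norm_eq_abs, abs_of_nonneg hc0, hzy]
    have hcval : c = t / (1 - t) := by
      rw [hwd] at hnorm
      rw [eq_div_iff (by linarith : (1:ℝ) - t ≠ 0)]
      have h2 : (c * (1 - t) - t) * ‖y - x‖ = 0 := by linear_combination -hnorm
      have h3 := mul_eq_zero.mp h2
      rcases h3 with h3 | h3
      · linarith
      · exact absurd h3 (ne_of_gt hyx0)
    have hzyval : z - y = (t - 1) • (y - x) := by rw [hz]; module
    have : w - z = (c * (t - 1)) • (y - x) := by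
      rw [hc, hzyval, smul_smul]
    have h1t : (1:ℝ) - t ≠ 0 := by linarith
    have hct : c * (t - 1) = -t := by
      rw [hcval, div_mul_eq_mul_div, div_eq_iff h1t]; ring
    rw [hct] at this
    have : w = x := by
      have hzx : z = x + t • (y - x) := hz
      have := this
      rw [hzx] at this
      have : w - x = (0:ℝ) • (y - x) := by
        have h' : w - (x + t • (y - x)) = (-t) • (y - x) := this
        rw [zero_smul]
        have : w - x = (w - (x + t • (y - x))) + t • (y - x) := by abel
        rw [this, h']
        module
      simpa [sub_eq_zero] using this
    exact this
  · rintro rfl; exact hxmem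
end

section
/- Let K be an r-prox-regular closed subset of a real Hilbert space H for some r > 0. Then for every u ∈ H with d(u,K) < r, the set Proj_K(u) of nearest points of K to u is a singleton. -/
/-!
At a nearest point `a ∈ Proj_K(u)`, prox-regularity says that the open ball of radius `r` centred at
`a + r (u - a)/d` misses `K`, where `d = d(u, K)`. Expanding the norm, every `b ∈ K` then satisfies
`2 r ⟪b - a, u - a⟫ ≤ d ‖b - a‖²`. Writing this for two nearest points `a, b` and adding the two
inequalities gives `r ‖b - a‖² ≤ d ‖b - a‖²`, so `a = b` since `d < r`.
-/

open Metric Set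
open scoped RealInnerProductSpace

variable {H : Type*} [NormedAddCommGroup H] [InnerProductSpace ℝ H]

lemma projSet_eq_singleton_of_mem {E : Type*} [NormedAddCommGroup E] {K : Set E} {u : E}
    (hu : u ∈ K) : projSet K u = {u} := by
  ext x
  simp only [projSet, mem_ofPred_eq, mem_singleton_iff, infDist_zero_of_mem hu, norm_eq_zero,
    sub_eq_zero]
  exact ⟨And.right, fun hx => ⟨hx ▸ hu, hx⟩⟩

lemma two_inner_le_norm_sq_of_norm_le_norm_sub {E : Type*} [NormedAddCommGroup E]
    [InnerProductSpace ℝ E] {v w : E} (h : ‖w‖ ≤ ‖v - w‖) : 2 * ⟪v, w⟫ ≤ ‖v‖ ^ 2 := by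
  have hsq : ‖w‖ ^ 2 ≤ ‖v - w‖ ^ 2 := pow_le_pow_left₀ (norm_nonneg w) h 2
  rw [norm_sub_sq_real] at hsq
  linarith

lemma IsProxRegular.two_mul_inner_le {r : ℝ} {K : Set H} (hreg : IsProxRegular r K) {u a b : H}
    (hpos : 0 < infDist u K) (hlt : infDist u K < r) (ha : a ∈ projSet K u) (hb : b ∈ K) :
    2 * r * ⟪b - a, u - a⟫ ≤ infDist u K * ‖b - a‖ ^ 2 := by
  set d := infDist u K
  have hua : ‖u - a‖ = d := by rw [norm_sub_rev]; exact ha.2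
  have hr : 0 < r := hpos.trans hlt
  set w : H := (r / d) • (u - a)
  have hw : ‖w‖ = r := by
    rw [norm_smul, hua, Real.norm_of_nonneg (div_pos hr hpos).le, div_mul_cancel₀ r hpos.ne']
  have hfar : ‖w‖ ≤ ‖(b - a) - w‖ := by
    have hproj : a ∈ projSet K (a + w) := by
      simpa only [hua] using (hreg u hpos hlt).2 a ha
    calc ‖w‖ = ‖a - (a + w)‖ := by rw [sub_add_cancel_left, norm_neg]
      _ = infDist (a + w) K := hproj.2
      _ ≤ dist (a + w) b := infDist_le_dist_of_mem hb
      _ = ‖(b - a) - w‖ := by rw [dist_comm, dist_eq_norm, sub_sub]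
  have key := two_inner_le_norm_sq_of_norm_le_norm_sub hfar
  rw [real_inner_smul_right] at key
  calc 2 * r * ⟪b - a, u - a⟫ = d * (2 * (r / d * ⟪b - a, u - a⟫)) := by
        field_simp
    _ ≤ d * ‖b - a‖ ^ 2 := mul_le_mul_of_nonneg_left key hpos.le

lemma IsProxRegular.projSet_subsingleton {r : ℝ} {K : Set H} (hreg : IsProxRegular r K) {u : H}
    (hpos : 0 < infDist u K) (hlt : infDist u K < r) : (projSet K u).Subsingleton := by
  intro a ha b hb
  have hab := hreg.two_mul_inner_le hpos hlt ha hb.1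
  have hba := hreg.two_mul_inner_le hpos hlt hb ha.1
  have hsum : ⟪b - a, u - a⟫ + ⟪a - b, u - b⟫ = ‖b - a‖ ^ 2 := by
    rw [← neg_sub b a, inner_neg_left, ← sub_eq_add_neg, ← inner_sub_right,
      sub_sub_sub_cancel_left, real_inner_self_eq_norm_sq]
  rw [norm_sub_rev a b] at hba
  have hzero : ‖b - a‖ ^ 2 ≤ 0 := by nlinarith [sq_nonneg ‖b - a‖]
  simpa [sub_eq_zero, eq_comm] using hzero

theorem stmt_3_general (r : ℝ) (K : Set H)
    (hK : IsClosed K) (hKne : K.Nonempty) (hreg : IsProxRegular r K)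
    (u : H) (hu : Metric.infDist u K < r) :
    ∃ x : H, projSet K u = {x} := by
  rcases (infDist_nonneg (x := u) (s := K)).eq_or_lt with hzero | hpos
  · exact ⟨u, projSet_eq_singleton_of_mem ((hK.mem_iff_infDist_zero hKne).2 hzero.symm)⟩
  · exact exists_eq_singleton_iff_nonempty_subsingleton.2
      ⟨(hreg u hpos hu).1, hreg.projSet_subsingleton hpos hu⟩

theorem stmt_3 [CompleteSpace H] (r : ℝ) (hr : 0 < r) (K : Set H)
    (hK : IsClosed K) (hKne : K.Nonempty) (hreg : IsProxRegular r K)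
    (u : H) (hu : Metric.infDist u K < r) :
    ∃ x : H, projSet K u = {x} :=
  stmt_3_general r K hK hKne hreg u hu
end

section
/- Let K be a nonempty closed subset of a real Hilbert space H and r > 0. If K is r-prox-regular, then for every x ∈ K and every n ∈ N_K(x) one has ⟨n, z−x⟩ ≤ (‖n‖/(2r))‖z−x‖² for all z ∈ K. -/
open Metric Set
open scoped RealInnerProductSpace

variable {H : Type*} [NormedAddCommGroup H] [InnerProductSpace ℝ H]

/-
The quadratic bound only uses the ball condition: if `x` is a nearest point of `K` to `x + v`,
then `‖v‖ ≤ ‖z - x - v‖` for `z ∈ K`, which expands to `2 ⟪v, z - x⟫ ≤ ‖z - x‖²`. For a proximal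
normal `y - x`, prox-regularity lets `v` be taken of length `r` in the direction `y - x`: first
move `y` towards `x` until its distance to `K` is below `r`, then push it back out to distance `r`.
-/

section NormedSpace

variable {E : Type*} [NormedAddCommGroup E] {K : Set E} {x y : E}

lemma infDist_eq_norm_of_mem_projSet (hx : x ∈ projSet K y) : infDist y K = ‖y - x‖ := by
  rw [← hx.2, norm_sub_rev]

variable [NormedSpace ℝ E]

lemma mem_projSet_add_smul_sub {t : ℝ} (hx : x ∈ projSet K y) (ht₀ : 0 ≤ t) (ht₁ : t ≤ 1) :
    x ∈ projSet K (x + t • (y - x)) := by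
  set w := x + t • (y - x)
  have hxw : ‖x - w‖ = t * ‖y - x‖ := by
    rw [show x - w = (-t) • (y - x) by module, norm_smul, norm_neg, Real.norm_of_nonneg ht₀]
  have hyw : dist y w = (1 - t) * ‖y - x‖ := by
    rw [dist_eq_norm, show y - w = (1 - t) • (y - x) by module, norm_smul,
      Real.norm_of_nonneg (by linarith)]
  refine ⟨hx.1, le_antisymm ?_ ?_⟩
  · have := infDist_le_infDist_add_dist (x := y) (y := w) (s := K)
    rw [infDist_eq_norm_of_mem_projSet hx, hyw] at this
    linarith
  · simpa [hxw, dist_eq_norm, norm_sub_rev] using infDist_le_dist_of_mem hx.1 (x := w)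

lemma smul_div_norm_smul (r : ℝ) {t : ℝ} (ht : 0 < t) (v : E) :
    (r / ‖t • v‖) • (t • v) = (r / ‖v‖) • v := by
  rcases eq_or_ne v 0 with rfl | hv
  · simp
  rw [norm_smul, Real.norm_of_nonneg ht.le, smul_smul]
  congr 1
  field_simp

end NormedSpace

section InnerProductSpace

variable {K : Set H} {x y : H}

lemma IsProxRegular.mem_projSet_extend {r : ℝ} (hreg : IsProxRegular r K) (hr : 0 < r)
    (hx : x ∈ projSet K y) (hxy : y ≠ x) :
    x ∈ projSet K (x + (r / ‖y - x‖) • (y - x)) := by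
  have hd : 0 < ‖y - x‖ := norm_pos_iff.mpr (sub_ne_zero.mpr hxy)
  -- any `t ∈ (0, 1]` with `t * ‖y - x‖ < r` would do
  set t := r / (2 * ‖y - x‖ + r)
  have ht : 0 < t := by positivity
  have hwx : x + t • (y - x) - x = t • (y - x) := by abel
  have hw := mem_projSet_add_smul_sub hx ht.le
    ((div_le_one (by positivity)).mpr (by linarith))
  have hdist : infDist (x + t • (y - x)) K = t * ‖y - x‖ := by
    rw [infDist_eq_norm_of_mem_projSet hw, hwx, norm_smul, Real.norm_of_nonneg ht.le]
  have hlt : t * ‖y - x‖ < r := by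
    rw [div_mul_eq_mul_div, div_lt_iff₀ (by positivity)]
    nlinarith
  have := (hreg _ (hdist ▸ by positivity) (hdist ▸ hlt)).2 x hw
  rwa [hwx, smul_div_norm_smul r ht] at this

lemma two_mul_inner_le_of_mem_projSet_add {v z : H} (hx : x ∈ projSet K (x + v)) (hz : z ∈ K) :
    2 * ⟪v, z - x⟫ ≤ ‖z - x‖ ^ 2 := by
  have hv : ‖v‖ ≤ ‖z - x - v‖ := by
    have := infDist_le_dist_of_mem hz (x := x + v)
    rwa [infDist_eq_norm_of_mem_projSet hx, add_sub_cancel_left, dist_comm, dist_eq_norm,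
      ← sub_sub] at this
  have := pow_le_pow_left₀ (norm_nonneg v) hv 2
  rw [norm_sub_sq_real, real_inner_comm] at this
  linarith

end InnerProductSpace

theorem stmt_8_general (r : ℝ) (hr : 0 < r) (K : Set H)
    (hreg : IsProxRegular r K)
    (x : H) (n : H) (hn : n ∈ proxNormalCone K x) :
    ∀ z ∈ K, (inner ℝ n (z - x) : ℝ) ≤ (‖n‖ / (2 * r)) * ‖z - x‖ ^ 2 := by
  intro z hz
  obtain ⟨l, hl, y, hxy, rfl⟩ := hn
  rcases eq_or_ne y x with rfl | hne
  · simp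
  have hd : 0 < ‖y - x‖ := norm_pos_iff.mpr (sub_ne_zero.mpr hne)
  have hquad := two_mul_inner_le_of_mem_projSet_add (hreg.mem_projSet_extend hr hxy hne) hz
  have hn : l • (y - x) = (l * ‖y - x‖ / r) • ((r / ‖y - x‖) • (y - x)) := by
    rw [smul_smul]
    congr 1
    field_simp
  have hnorm : ‖l • (y - x)‖ = l * ‖y - x‖ := by rw [norm_smul, Real.norm_of_nonneg hl]
  rw [hnorm, hn, real_inner_smul_left]
  calc l * ‖y - x‖ / r * ⟪(r / ‖y - x‖) • (y - x), z - x⟫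
      ≤ l * ‖y - x‖ / r * (‖z - x‖ ^ 2 / 2) :=
        mul_le_mul_of_nonneg_left (by linarith) (by positivity)
    _ = l * ‖y - x‖ / (2 * r) * ‖z - x‖ ^ 2 := by ring

theorem stmt_8 [CompleteSpace H] (r : ℝ) (hr : 0 < r) (K : Set H)
    (hK : IsClosed K) (hKne : K.Nonempty) (hreg : IsProxRegular r K)
    (x : H) (hx : x ∈ K) (n : H) (hn : n ∈ proxNormalCone K x) :
    ∀ z ∈ K, (inner ℝ n (z - x) : ℝ) ≤ (‖n‖ / (2 * r)) * ‖z - x‖ ^ 2 :=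
  stmt_8_general r hr K hreg x n hn
end

section
/- Catching-up step well-posedness: let C₀, C₁ be r-prox-regular closed subsets of a real Hilbert space H with e(C₀,C₁) < r, where e is the excess. Then for every y₀ ∈ C₀ there exists a unique y₁ ∈ C₁ with ‖y₁−y₀‖ = d(y₀,C₁), and moreover ‖y₁−y₀‖ ≤ e(C₀,C₁) and y₀−y₁ ∈ N_{C₁}(y₁). -/
open Metric Set
open scoped RealInnerProductSpace

variable {H : Type*} [NormedAddCommGroup H] [InnerProductSpace ℝ H]

/-! Uniqueness of the nearest point is the hypomonotonicity of proximal normals: if `x ∈ C₁`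
is a nearest point to `y₀` at distance `d ∈ (0, r)`, prox-regularity says `x` stays a nearest
point of `x + (r/d)(y₀ - x)`, so the ball of radius `r` around that point misses `C₁`, which reads
`⟪z - x, y₀ - x⟫ ≤ d/(2r) ‖z - x‖²` for every `z ∈ C₁`. Adding this for two nearest points `x, x'`
gives `‖x - x'‖² ≤ (d/r) ‖x - x'‖²`, forcing `x = x'` as `d < r`. The excess bounds `d`. -/

lemma real_inner_le_of_le_norm_sub_smul {r : ℝ} (hr : 0 < r) {a v : H} (hv : v ≠ 0)
    (h : r ≤ ‖a - (r / ‖v‖) • v‖) : ⟪a, v⟫ ≤ ‖v‖ / (2 * r) * ‖a‖ ^ 2 := by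
  have hv' : 0 < ‖v‖ := norm_pos_iff.mpr hv
  have hsq : r ^ 2 ≤ ‖a‖ ^ 2 - 2 * (r / ‖v‖) * ⟪a, v⟫ + r ^ 2 := by
    have hexp : ‖a - (r / ‖v‖) • v‖ ^ 2 = ‖a‖ ^ 2 - 2 * (r / ‖v‖) * ⟪a, v⟫ + r ^ 2 := by
      rw [norm_sub_sq_real, real_inner_smul_right, norm_smul, Real.norm_of_nonneg (by positivity)]
      field_simp
    rw [← hexp]
    gcongr
  have hmul : 2 * r * ⟪a, v⟫ ≤ ‖v‖ * ‖a‖ ^ 2 := by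
    have := mul_le_mul_of_nonneg_left (show 2 * (r / ‖v‖) * ⟪a, v⟫ ≤ ‖a‖ ^ 2 by linarith) hv'.le
    rwa [← mul_assoc, ← mul_assoc, mul_comm ‖v‖ 2, mul_assoc 2, mul_div_cancel₀ _ hv'.ne'] at this
  rw [div_mul_eq_mul_div, le_div_iff₀ (by positivity)]
  linarith

omit [InnerProductSpace ℝ H] in
lemma infEDist_le_excess {A : Set H} {a : H} (ha : a ∈ A) (B : Set H) :
    infEDist a B ≤ excess A B :=
  le_iSup₂ (f := fun a (_ : a ∈ A) => infEDist a B) a ha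

omit [InnerProductSpace ℝ H] in
lemma projSet_of_mem {K : Set H} {y : H} (hy : y ∈ K) : projSet K y = {y} := by
  ext x
  simp only [projSet, mem_ofPred_eq, mem_singleton_iff, infDist_zero_of_mem hy, norm_eq_zero,
    sub_eq_zero]
  exact ⟨And.right, fun hxy => ⟨hxy ▸ hy, hxy⟩⟩

omit [InnerProductSpace ℝ H] in
lemma norm_sub_eq_infDist {K : Set H} {x y : H} (hx : x ∈ projSet K y) :
    ‖y - x‖ = infDist y K := by
  rw [norm_sub_rev]; exact hx.2

lemma sub_mem_proxNormalCone {K : Set H} {x y : H} (hx : x ∈ projSet K y) :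
    y - x ∈ proxNormalCone K x :=
  ⟨1, zero_le_one, y, hx, (one_smul ℝ _).symm⟩

namespace IsProxRegular

variable {r : ℝ} {K : Set H} {x y z : H}

lemma real_inner_sub_le (hK : IsProxRegular r K) (hpos : 0 < infDist y K)
    (hlt : infDist y K < r) (hx : x ∈ projSet K y) (hz : z ∈ K) :
    ⟪z - x, y - x⟫ ≤ infDist y K / (2 * r) * ‖z - x‖ ^ 2 := by
  have hr : 0 < r := hpos.trans hlt
  have hyx : y - x ≠ 0 := by
    rw [← norm_pos_iff, norm_sub_eq_infDist hx]; exact hpos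
  rw [← norm_sub_eq_infDist hx]
  refine real_inner_le_of_le_norm_sub_smul hr hyx ?_
  have hpush := (hK y hpos hlt).2 x hx
  have hdist : infDist (x + (r / ‖y - x‖) • (y - x)) K = r := by
    rw [← hpush.2, sub_add_cancel_left, norm_neg, norm_smul,
      Real.norm_of_nonneg (div_pos hr (norm_pos_iff.mpr hyx)).le,
      div_mul_cancel₀ _ (norm_pos_iff.mpr hyx).ne']
  calc r = infDist (x + (r / ‖y - x‖) • (y - x)) K := hdist.symm
    _ ≤ ‖z - (x + (r / ‖y - x‖) • (y - x))‖ :=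
      (infDist_le_dist_of_mem hz).trans_eq (dist_eq_norm' _ _)
    _ = ‖z - x - (r / ‖y - x‖) • (y - x)‖ := by rw [sub_sub]

lemma eq_of_mem_projSet (hK : IsProxRegular r K) (hpos : 0 < infDist y K)
    (hlt : infDist y K < r) {x' : H} (hx : x ∈ projSet K y) (hx' : x' ∈ projSet K y) :
    x' = x := by
  set d := infDist y K
  have h₁ := hK.real_inner_sub_le hpos hlt hx hx'.1
  have h₂ := hK.real_inner_sub_le hpos hlt hx' hx.1
  have hsum : ⟪x' - x, y - x⟫ + ⟪x - x', y - x'⟫ = ‖x' - x‖ ^ 2 := by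
    rw [← neg_sub x' x, inner_neg_left, ← sub_eq_add_neg, ← inner_sub_right,
      sub_sub_sub_cancel_left, real_inner_self_eq_norm_sq]
  rw [norm_sub_rev x x'] at h₂
  have hle : ‖x' - x‖ ^ 2 ≤ d / r * ‖x' - x‖ ^ 2 := by
    have : d / (2 * r) + d / (2 * r) = d / r := by field_simp; ring
    nlinarith
  have hdr : d / r < 1 := (div_lt_one (hpos.trans hlt)).mpr hlt
  have : ‖x' - x‖ ^ 2 = 0 := by nlinarith [sq_nonneg ‖x' - x‖]
  simpa [sub_eq_zero] using this

lemma exists_projSet_eq_singleton (hK : IsProxRegular r K) (hKc : IsClosed K)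
    (hy : infEDist y K < ENNReal.ofReal r) : ∃ x, projSet K y = {x} := by
  rcases (infDist_nonneg (x := y) (s := K)).eq_or_lt with h0 | hpos
  · have hyK : y ∈ K := by
      rw [← hKc.closure_eq, mem_closure_iff_infEDist_zero]
      exact ((ENNReal.toReal_eq_zero_iff _).1 h0.symm).resolve_right
        (hy.trans ENNReal.ofReal_lt_top).ne
    exact ⟨y, projSet_of_mem hyK⟩
  · have hlt : infDist y K < r := ENNReal.toReal_lt_of_lt_ofReal hy
    obtain ⟨x, hx⟩ := (hK y hpos hlt).1
    exact ⟨x, eq_singleton_iff_unique_mem.mpr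
      ⟨hx, fun x' hx' => hK.eq_of_mem_projSet hpos hlt hx hx'⟩⟩

end IsProxRegular

theorem stmt_10_general (r : ℝ) (C₀ C₁ : Set H)
    (hC₁ : IsClosed C₁) (hC₁reg : IsProxRegular r C₁)
    (hexc : excess C₀ C₁ < ENNReal.ofReal r) :
    ∀ y₀ ∈ C₀, ∃ y₁ : H, projSet C₁ y₀ = {y₁} ∧
      ENNReal.ofReal ‖y₁ - y₀‖ ≤ excess C₀ C₁ ∧
      y₀ - y₁ ∈ proxNormalCone C₁ y₁ := by
  intro y₀ hy₀
  have hle := infEDist_le_excess hy₀ C₁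
  have hlt := hle.trans_lt hexc
  obtain ⟨y₁, hy₁⟩ := hC₁reg.exists_projSet_eq_singleton hC₁ hlt
  have hmem : y₁ ∈ projSet C₁ y₀ := hy₁ ▸ rfl
  refine ⟨y₁, hy₁, ?_, sub_mem_proxNormalCone hmem⟩
  rw [hmem.2, infDist, ENNReal.ofReal_toReal (hlt.trans ENNReal.ofReal_lt_top).ne]
  exact hle

theorem stmt_10 [CompleteSpace H] (r : ℝ) (hr : 0 < r) (C₀ C₁ : Set H)
    (hC₀ : IsClosed C₀) (hC₀ne : C₀.Nonempty) (hC₀reg : IsProxRegular r C₀)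
    (hC₁ : IsClosed C₁) (hC₁ne : C₁.Nonempty) (hC₁reg : IsProxRegular r C₁)
    (hexc : excess C₀ C₁ < ENNReal.ofReal r) :
    ∀ y₀ ∈ C₀, ∃ y₁ : H, projSet C₁ y₀ = {y₁} ∧
      ENNReal.ofReal ‖y₁ - y₀‖ ≤ excess C₀ C₁ ∧
      y₀ - y₁ ∈ proxNormalCone C₁ y₁ :=
  stmt_10_general r C₀ C₁ hC₁ hC₁reg hexc
end

section
/- Uniform inner ball persistence: let r > 0 and let C : [0,T] → closed subsets of a real Hilbert space H with each C(t) r-prox-regular. Fix t₀ ∈ [0,T), and suppose e(C(t₀),C(t)) ≤ ω(t−t₀) for all t ∈ [t₀,T] with ω nondecreasing and ω(t)→0 as t→0⁺. Suppose B(x,ρ₀) ⊆ C(t₀) for some x ∈ H, ρ₀ > 0. Then for every ρ ∈ (0,ρ₀) there exists τ > 0, depending only on ω, r, ρ₀, ρ (not on x or t₀), such that B(x,ρ) ⊆ C(t) for all t ∈ [t₀, min{t₀+τ, T}]. -/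
open Metric Set
open scoped RealInnerProductSpace

variable {H : Type*} [NormedAddCommGroup H] [InnerProductSpace ℝ H]

theorem stmt_11 [CompleteSpace H] (r T ρ₀ ρ : ℝ) (hr : 0 < r) (hT : 0 < T)
    (hρ : 0 < ρ) (hρρ₀ : ρ < ρ₀)
    (ω : ℝ → ℝ) (hωmono : Monotone ω)
    (hω0 : Filter.Tendsto ω (nhdsWithin 0 (Set.Ioi 0)) (nhds 0)) :
    ∃ τ : ℝ, 0 < τ ∧ τ ≤ T ∧
      ∀ (C : ℝ → Set H) (t₀ : ℝ), t₀ ∈ Set.Ico 0 T →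
        (∀ t ∈ Set.Icc (0 : ℝ) T,
          IsClosed (C t) ∧ (C t).Nonempty ∧ IsProxRegular r (C t)) →
        (∀ t ∈ Set.Icc t₀ T,
          excess (C t₀) (C t) ≤ ENNReal.ofReal (ω (t - t₀))) →
        ∀ x : H, Metric.ball x ρ₀ ⊆ C t₀ →
          ∀ t ∈ Set.Icc t₀ (min (t₀ + τ) T), Metric.ball x ρ ⊆ C t := by
  set ε : ℝ := min ((ρ₀ - ρ)/2) (r/2) with hεdef
  have hεpos : 0 < ε := lt_min (by linarith) (by linarith)
  have hεle1 : ε ≤ (ρ₀ - ρ)/2 := min_le_left _ _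
  have hεle2 : ε ≤ r/2 := min_le_right _ _
  obtain ⟨δ, hδpos, hδ⟩ : ∃ δ > 0, ∀ s, 0 < s → s < δ → ω s < ε := by
    obtain ⟨δ, hδpos, h⟩ := Metric.tendsto_nhdsWithin_nhds.mp hω0 ε hεpos
    refine ⟨δ, hδpos, fun s hs hsδ => ?_⟩
    have h2 := h (Set.mem_Ioi.mpr hs) (by simpa [Real.dist_eq, abs_of_pos hs] using hsδ)
    rw [Real.dist_eq, sub_zero] at h2
    exact lt_of_le_of_lt (le_abs_self _) h2
  refine ⟨min (δ/2) T, lt_min (by positivity) hT, min_le_right _ _, ?_⟩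
  intro C t₀ ht₀ hC hexc x hball t ht y hy
  have htT : t ∈ Set.Icc (0:ℝ) T := ⟨le_trans ht₀.1 ht.1, le_trans ht.2 (min_le_right _ _)⟩
  obtain ⟨hclosed, hne, hPR⟩ := hC t htT
  by_contra hyC
  set ε' : ℝ := max (ω (t - t₀)) 0 with hε'def
  have hωτ : ω (t - t₀) < ε := by
    have h1 : t - t₀ ≤ min (δ/2) T := by
      have h := le_trans ht.2 (min_le_left _ _); linarith
    have h2 : min (δ/2) T < δ := lt_of_le_of_lt (min_le_left _ _) (by linarith)
    calc ω (t - t₀) ≤ ω (min (δ/2) T) := hωmono h1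
      _ < ε := hδ _ (lt_min (by linarith) hT) h2
  have hε'lt : ε' < ε := max_lt hωτ hεpos
  have hε'nonneg : 0 ≤ ε' := le_max_right _ _
  have hdist : ∀ a ∈ C t₀, Metric.infDist a (C t) ≤ ε' := by
    intro a ha
    have h1 : EMetric.infEdist a (C t) ≤ excess (C t₀) (C t) := by
      rw [excess]; exact le_iSup₂ (f := fun b _ => EMetric.infEdist b (C t)) a ha
    have h2 : EMetric.infEdist a (C t) ≤ ENNReal.ofReal ε' :=
      le_trans (le_trans h1 (hexc t ⟨ht.1, le_trans ht.2 (min_le_right _ _)⟩))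
        (ENNReal.ofReal_le_ofReal (le_max_left _ _))
    rw [Metric.infDist]
    exact ENNReal.toReal_le_of_le_ofReal hε'nonneg h2
  have hyball₀ : y ∈ Metric.ball x ρ₀ := mem_ball.mpr (lt_trans (mem_ball.mp hy) hρρ₀)
  have hyC₀ : y ∈ C t₀ := hball hyball₀
  set d : ℝ := Metric.infDist y (C t) with hddef
  have hdpos : 0 < d := (IsClosed.notMem_iff_infDist_pos hclosed hne).mp hyC
  have hdle : d ≤ ε' := hdist y hyC₀
  have hdr : d < r := by linarith
  obtain ⟨hprojne, hproj⟩ := hPR y hdpos hdr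
  obtain ⟨p, hpC, hpdist⟩ := hprojne
  have hz := hproj p ⟨hpC, hpdist⟩
  set z : H := p + (r / ‖y - p‖) • (y - p) with hzdef
  have hnyp : ‖y - p‖ = d := by rw [norm_sub_rev]; exact hpdist
  have hzp : ‖p - z‖ = r := by
    have h : p - z = -((r / ‖y - p‖) • (y - p)) := by rw [hzdef]; abel
    rw [h, norm_neg, norm_smul, hnyp, Real.norm_eq_abs,
      abs_of_nonneg (div_nonneg hr.le hdpos.le), div_mul_cancel₀ _ (ne_of_gt hdpos)]
  have hzdist : Metric.infDist z (C t) = r := by rw [← hz.2, hzp]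
  set q : H := y + (ε' / d) • (y - p) with hqdef
  have hqx : dist q x < ρ₀ := by
    have h1 : dist q x ≤ dist q y + dist y x := dist_triangle _ _ _
    have h2 : dist q y = ε' := by
      have h : q - y = (ε' / d) • (y - p) := by rw [hqdef]; abel
      rw [dist_eq_norm, h, norm_smul, hnyp, Real.norm_eq_abs,
        abs_of_nonneg (div_nonneg hε'nonneg hdpos.le), div_mul_cancel₀ _ (ne_of_gt hdpos)]
    have h3 : dist y x < ρ := mem_ball.mp hy
    linarith
  have hqC₀ : q ∈ C t₀ := hball (mem_ball.mpr hqx)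
  have hqle : Metric.infDist q (C t) ≤ ε' := hdist q hqC₀
  have hzq : dist z q = r - d - ε' := by
    have key : z - q = ((r - d - ε')/d) • (y - p) := by
      have hd0 : d ≠ 0 := ne_of_gt hdpos
      rw [hzdef, hqdef, hnyp]
      have h : (r - d - ε')/d = r/d - ε'/d - 1 := by field_simp; ring
      rw [h, sub_smul, sub_smul, one_smul]
      abel
    rw [dist_eq_norm, key, norm_smul, hnyp, Real.norm_eq_abs,
      abs_of_nonneg (div_nonneg (by linarith) hdpos.le), div_mul_cancel₀ _ (ne_of_gt hdpos)]
  have hfin : Metric.infDist z (C t) ≤ Metric.infDist q (C t) + dist z q :=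
    Metric.infDist_le_infDist_add_dist
  rw [hzdist, hzq] at hfin
  linarith
end

section
/- Total variation estimate for iterated projections (Colombo–Monteiro Marques lemma): let m ∈ ℕ, r > 0, and C₁,…,C_m be r-prox-regular subsets of a real Hilbert space H with e(C_k, C_{k+1}) < r/2 for k = 1,…,m−1, and suppose there are w ∈ H and ρ > 0 with B(w,ρ) ⊆ C_k for all k. Let y₀ ∈ H with d(y₀,C₁) < r/2, define y_k := P_{C_k}(y_{k−1}) for k = 1,…,m, and set α := max{d(y₀,C₁), e(C₁,C₂), …, e(C_{m−1},C_m)} + ‖y₀−w‖ + ρ. If α² < 2rρ, then ∑_{k=1}^m ‖y_k − y_{k−1}‖ ≤ max{ r(‖y₀−w‖² − ρ²)/(2rρ − α²), 0 }. -/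
open Metric Set
open scoped RealInnerProductSpace

variable {H : Type*} [NormedAddCommGroup H] [InnerProductSpace ℝ H]

/-- If `K` contains an open ball `B(w,ρ)` and `p` is at distance at least `ρ` from `w`,
then `d(p,K) ≤ ‖p - w‖ - ρ`. -/
private lemma ball_infDist_le (K : Set H) (w : H) (ρ : ℝ) (hρ : 0 < ρ)
    (hball : Metric.ball w ρ ⊆ K) (p : H) (hp : ρ ≤ ‖p - w‖) :
    Metric.infDist p K ≤ ‖p - w‖ - ρ := by
  have ha : 0 < ‖p - w‖ := lt_of_lt_of_le hρ hp
  have key : ∀ ρ' : ℝ, 0 ≤ ρ' → ρ' < ρ → Metric.infDist p K ≤ ‖p - w‖ - ρ' := by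
    intro ρ' h0 hlt
    set q := w + (ρ' / ‖p - w‖) • (p - w) with hqdef
    have hqw : ‖q - w‖ = ρ' := by
      have h1 : q - w = (ρ' / ‖p - w‖) • (p - w) := by rw [hqdef]; abel
      rw [h1, norm_smul, Real.norm_eq_abs, abs_of_nonneg (by positivity),
        div_mul_cancel₀ _ ha.ne']
    have hqK : q ∈ K := by
      apply hball
      rw [mem_ball, dist_eq_norm, hqw]
      exact hlt
    have hfrac : ρ' / ‖p - w‖ ≤ 1 := by
      rw [div_le_one ha]; linarith
    have hpq : ‖p - q‖ = ‖p - w‖ - ρ' := by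
      have h1 : p - q = (1 - ρ' / ‖p - w‖) • (p - w) := by
        rw [hqdef]
        rw [sub_smul, one_smul]
        abel
      rw [h1, norm_smul, Real.norm_eq_abs, abs_of_nonneg (by linarith), sub_mul, one_mul,
        div_mul_cancel₀ _ ha.ne']
    calc Metric.infDist p K ≤ dist p q := Metric.infDist_le_dist_of_mem hqK
      _ = ‖p - q‖ := dist_eq_norm _ _
      _ = ‖p - w‖ - ρ' := hpq
  have : ∀ ε > 0, Metric.infDist p K ≤ (‖p - w‖ - ρ) + ε := by
    intro ε hε
    have h1 : 0 < min (ρ / 2) ε := lt_min (by linarith) hε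
    have h2 := key (ρ - min (ρ / 2) ε)
      (by have := min_le_left (ρ / 2) ε; linarith) (by linarith)
    have h3 := min_le_right (ρ / 2) ε
    linarith
  exact le_of_forall_pos_le_add this

/-- Key hypomonotonicity step: the decrease of squared distance to the center. -/
private lemma step_key [CompleteSpace H] (r ρ α : ℝ) (hr : 0 < r) (hρ : 0 < ρ)
    (K : Set H) (hK : IsClosed K) (hprox : IsProxRegular r K)
    (w : H) (hball : Metric.ball w ρ ⊆ K) (p q : H) (hq : q ∈ projSet K p)
    (hdr : Metric.infDist p K < r)
    (hαb : ‖p - w‖ + ‖q - p‖ + ρ ≤ α) :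
    ‖q - p‖ * (2 * r * ρ - α ^ 2) ≤ r * (‖p - w‖ ^ 2 - ‖q - w‖ ^ 2) := by
  rcases eq_or_lt_of_le (norm_nonneg (q - p)) with h0 | h0
  · have hqp : q = p := by
      rw [eq_comm, norm_eq_zero, sub_eq_zero] at h0
      exact h0
    simp [hqp, ← h0]
  · set d := ‖q - p‖ with hd
    have hdist : Metric.infDist p K = d := hq.2.symm
    have hprox2 := (hprox p (by rw [hdist]; exact h0) hdr).2 q hq
    set v := q + (r / ‖p - q‖) • (p - q) with hv
    have hpq : ‖p - q‖ = d := by rw [hd, norm_sub_rev]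
    have hqv : ‖q - v‖ = r := by
      have h1 : q - v = -((r / ‖p - q‖) • (p - q)) := by rw [hv]; abel
      rw [h1, norm_neg, norm_smul, Real.norm_eq_abs, hpq,
        abs_of_nonneg (by positivity), div_mul_cancel₀ _ h0.ne']
    set u := d⁻¹ • (p - q) with hu
    have hun : ‖u‖ = 1 := by
      rw [hu, norm_smul, Real.norm_eq_abs, abs_of_nonneg (inv_nonneg.2 h0.le), hpq,
        inv_mul_cancel₀ h0.ne']
    set z := w + ρ • u with hz
    have hzK : z ∈ K := by
      have hzw : z ∈ closedBall w ρ := by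
        rw [mem_closedBall, dist_eq_norm]
        have h1 : z - w = ρ • u := by rw [hz]; abel
        rw [h1, norm_smul, hun, Real.norm_eq_abs, abs_of_pos hρ, mul_one]
      rw [← closure_ball w hρ.ne'] at hzw
      have := closure_mono hball hzw
      rwa [hK.closure_eq] at this
    have h2 : r ≤ ‖z - v‖ := by
      calc r = ‖q - v‖ := hqv.symm
        _ = Metric.infDist v K := hprox2.2
        _ ≤ dist v z := Metric.infDist_le_dist_of_mem hzK
        _ = ‖z - v‖ := by rw [dist_comm, dist_eq_norm]
    -- expansion of ‖z - v‖²
    have hexp : ‖z - v‖ ^ 2 = ‖z - q‖ ^ 2 - 2 * (r / d) * ⟪z - q, p - q⟫ + r ^ 2 := by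
      have hzv : z - v = (z - q) - (r / d) • (p - q) := by
        rw [hv, hpq]; abel
      rw [hzv, norm_sub_sq_real, real_inner_smul_right, norm_smul, Real.norm_eq_abs,
        abs_of_nonneg (by positivity), hpq, div_mul_cancel₀ _ h0.ne']
      ring
    -- inner product values
    have hip1 : ⟪z - q, p - q⟫ = ⟪p - q, w - q⟫ + ρ * d := by
      have hzq : z - q = (w - q) + ρ • u := by rw [hz]; abel
      have huip : ⟪u, p - q⟫ = d := by
        rw [hu, real_inner_smul_left, real_inner_self_eq_norm_sq, hpq, pow_two,
          ← mul_assoc, inv_mul_cancel₀ h0.ne', one_mul]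
      rw [hzq, inner_add_left, real_inner_smul_left, huip, real_inner_comm]
    have hip2 : ‖p - w‖ ^ 2 = d ^ 2 + 2 * ⟪p - q, q - w⟫ + ‖q - w‖ ^ 2 := by
      have h3 : ‖p - w‖ ^ 2 = ‖(p - q) + (q - w)‖ ^ 2 := by rw [sub_add_sub_cancel]
      rw [h3, norm_add_sq_real, hpq]
    have hip3 : ⟪p - q, w - q⟫ = -⟪p - q, q - w⟫ := by
      have : w - q = -(q - w) := by abel
      rw [this, inner_neg_right]
    -- bound on ‖z - q‖
    have hzqb : ‖z - q‖ ≤ α := by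
      have h1 : z - q = ρ • u + (w - p) + (p - q) := by rw [hz]; abel
      have h2 : ‖z - q‖ ≤ ‖ρ • u‖ + ‖w - p‖ + ‖p - q‖ := by
        rw [h1]; exact norm_add₃_le
      have h3 : ‖ρ • u‖ = ρ := by
        rw [norm_smul, hun, Real.norm_eq_abs, abs_of_pos hρ, mul_one]
      have h4 : ‖w - p‖ = ‖p - w‖ := norm_sub_rev _ _
      rw [h3, h4, hpq] at h2
      linarith
    have hα0 : 0 ≤ α := by
      have := norm_nonneg (p - w); have := norm_nonneg (q - p); linarith
    have h5 : r ^ 2 ≤ ‖z - v‖ ^ 2 := pow_le_pow_left₀ hr.le h2 2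
    have h6 : 2 * (r / d) * ⟪z - q, p - q⟫ ≤ ‖z - q‖ ^ 2 := by
      rw [hexp] at h5; linarith
    have h7 : ‖z - q‖ ^ 2 ≤ α ^ 2 := pow_le_pow_left₀ (norm_nonneg _) hzqb 2
    have h8 : 2 * (r / d) * ⟪z - q, p - q⟫ ≤ α ^ 2 := le_trans h6 h7
    have h9 := mul_le_mul_of_nonneg_right h8 h0.le
    have h10 : 2 * (r / d) * ⟪z - q, p - q⟫ * d = 2 * r * ⟪z - q, p - q⟫ := by
      field_simp
    rw [h10] at h9
    -- h9 : 2 * r * ⟪z - q, p - q⟫ ≤ α ^ 2 * d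
    rw [hip1, hip3] at h9
    -- goal: d * (2rρ - α²) ≤ r * (A² - B²)
    have hgoal : r * (‖p - w‖ ^ 2 - ‖q - w‖ ^ 2) = r * d ^ 2 + 2 * r * ⟪p - q, q - w⟫ := by
      rw [hip2]; ring
    rw [hgoal]
    nlinarith [mul_nonneg hr.le (sq_nonneg d)]

theorem stmt_13 [CompleteSpace H] (m : ℕ) (hm : 1 ≤ m) (r ρ : ℝ) (hr : 0 < r)
    (hρ : 0 < ρ) (C : ℕ → Set H)
    (hC : ∀ k ∈ Finset.Icc 1 m,
      IsClosed (C k) ∧ (C k).Nonempty ∧ IsProxRegular r (C k))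
    (hexc : ∀ k ∈ Finset.Icc 1 (m - 1),
      excess (C k) (C (k + 1)) < ENNReal.ofReal (r / 2))
    (w : H) (hball : ∀ k ∈ Finset.Icc 1 m, Metric.ball w ρ ⊆ C k)
    (y : ℕ → H) (hy0 : Metric.infDist (y 0) (C 1) < r / 2)
    (hy : ∀ k ∈ Finset.Icc 1 m, y k ∈ projSet (C k) (y (k - 1)))
    (α : ℝ)
    (hα : α = (max (EMetric.infEdist (y 0) (C 1))
        ((Finset.Icc 1 (m - 1)).sup fun k => excess (C k) (C (k + 1)))).toReal
      + ‖y 0 - w‖ + ρ)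
    (hα2 : α ^ 2 < 2 * r * ρ) :
    ∑ k ∈ Finset.Icc 1 m, ‖y k - y (k - 1)‖ ≤
      max (r * (‖y 0 - w‖ ^ 2 - ρ ^ 2) / (2 * r * ρ - α ^ 2)) 0 := by
  have h1m : 1 ∈ Finset.Icc 1 m := by simp [hm]
  set M : ENNReal := max (EMetric.infEdist (y 0) (C 1))
      ((Finset.Icc 1 (m - 1)).sup fun k => excess (C k) (C (k + 1))) with hM
  have hr2 : (0 : ℝ) < r / 2 := by linarith
  have hC1ne : (C 1).Nonempty := (hC 1 h1m).2.1
  have hM_lt : M < ENNReal.ofReal (r / 2) := by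
    rw [hM, max_lt_iff]
    constructor
    · have hne : EMetric.infEdist (y 0) (C 1) ≠ ⊤ := Metric.infEdist_ne_top hC1ne
      exact (ENNReal.lt_ofReal_iff_toReal_lt hne).2 hy0
    · apply (Finset.sup_lt_iff (by simp [ENNReal.ofReal_pos, hr2])).2
      intro k hk
      exact hexc k hk
  have hM_ne : M ≠ ⊤ := (hM_lt.trans ENNReal.ofReal_lt_top).ne
  set β := M.toReal with hβ
  have hβ_lt : β < r / 2 := ENNReal.toReal_lt_of_lt_ofReal hM_lt
  have hβ0 : 0 ≤ β := ENNReal.toReal_nonneg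
  -- distances
  have hdle : ∀ k ∈ Finset.Icc 1 m, Metric.infDist (y (k - 1)) (C k) ≤ β := by
    intro k hk
    rw [Finset.mem_Icc] at hk
    have hle : EMetric.infEdist (y (k - 1)) (C k) ≤ M := by
      rcases eq_or_lt_of_le hk.1 with h1 | h1
      · rw [← h1]
        simpa [hM] using le_max_left _ _
      · have hk2 : 2 ≤ k := h1
        have hkm1 : k - 1 ∈ Finset.Icc 1 m := by rw [Finset.mem_Icc]; omega
        have hy_mem : y (k - 1) ∈ C (k - 1) := (hy (k - 1) hkm1).1
        have h2 : EMetric.infEdist (y (k - 1)) (C ((k - 1) + 1)) ≤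
            excess (C (k - 1)) (C ((k - 1) + 1)) :=
          le_iSup₂_of_le (y (k - 1)) hy_mem le_rfl
        have hk1m : k - 1 ∈ Finset.Icc 1 (m - 1) := by rw [Finset.mem_Icc]; omega
        have h3 := Finset.le_sup (f := fun k => excess (C k) (C (k + 1))) hk1m
        have hkk : k - 1 + 1 = k := by omega
        have h3' : excess (C (k - 1)) (C (k - 1 + 1)) ≤
            (Finset.Icc 1 (m - 1)).sup (fun k => excess (C k) (C (k + 1))) := h3
        rw [hkk] at h2 h3'
        rw [hM]
        exact le_trans (le_trans h2 h3') (le_max_right _ _)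
    exact ENNReal.toReal_mono hM_ne hle
  have hdr' : ∀ k ∈ Finset.Icc 1 m, Metric.infDist (y (k - 1)) (C k) < r :=
    fun k hk => lt_of_le_of_lt (hdle k hk) (by linarith)
  have hdnorm : ∀ k ∈ Finset.Icc 1 m, ‖y k - y (k - 1)‖ = Metric.infDist (y (k - 1)) (C k) :=
    fun k hk => (hy k hk).2
  have hc : 0 < 2 * r * ρ - α ^ 2 := by linarith
  -- per-step inequality
  have hstep : ∀ k ∈ Finset.Icc 1 m, ‖y (k - 1) - w‖ ≤ ‖y 0 - w‖ →
      ‖y k - y (k - 1)‖ * (2 * r * ρ - α ^ 2) ≤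
        r * (‖y (k - 1) - w‖ ^ 2 - ‖y k - w‖ ^ 2) := by
    intro k hk hmon
    apply step_key r ρ α hr hρ (C k) (hC k hk).1 (hC k hk).2.2 w (hball k hk) _ _
      (hy k hk) (hdr' k hk)
    have hd1 := hdle k hk
    have hd2 := hdnorm k hk
    rw [← hd2] at hd1
    linarith [hα]
  -- monotone decrease
  have hmono : ∀ k, k ≤ m → ‖y k - w‖ ≤ ‖y 0 - w‖ := by
    intro k
    induction k with
    | zero => intro _; exact le_rfl
    | succ n ih =>
      intro hnm
      have ihn := ih (by omega)
      have hmem : n + 1 ∈ Finset.Icc 1 m := by rw [Finset.mem_Icc]; omega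
      have hs := hstep (n + 1) hmem (by simpa using ihn)
      simp only [Nat.add_sub_cancel] at hs
      have h1 : 0 ≤ r * (‖y n - w‖ ^ 2 - ‖y (n + 1) - w‖ ^ 2) :=
        le_trans (mul_nonneg (norm_nonneg _) hc.le) hs
      have h2 : ‖y (n + 1) - w‖ ^ 2 ≤ ‖y n - w‖ ^ 2 := by nlinarith
      have h3 : ‖y (n + 1) - w‖ ≤ ‖y n - w‖ := by
        nlinarith [norm_nonneg (y (n + 1) - w), norm_nonneg (y n - w)]
      linarith
  rcases le_or_gt ρ ‖y 0 - w‖ with hcase | hcase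
  · -- stay outside the ball
    have hlow : ∀ k, k ≤ m → ρ ≤ ‖y k - w‖ := by
      intro k
      induction k with
      | zero => intro _; exact hcase
      | succ n ih =>
        intro hnm
        have ihn := ih (by omega)
        have hmem : n + 1 ∈ Finset.Icc 1 m := by rw [Finset.mem_Icc]; omega
        have hd2 : Metric.infDist (y n) (C (n + 1)) ≤ ‖y n - w‖ - ρ :=
          ball_infDist_le (C (n + 1)) w ρ hρ (hball (n + 1) hmem) (y n) ihn
        have hdn := hdnorm (n + 1) hmem
        simp only [Nat.add_sub_cancel] at hdn
        have htri : ‖y n - w‖ ≤ ‖y (n + 1) - y n‖ + ‖y (n + 1) - w‖ := by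
          calc ‖y n - w‖ = ‖(y n - y (n + 1)) + (y (n + 1) - w)‖ := by rw [sub_add_sub_cancel]
            _ ≤ ‖y n - y (n + 1)‖ + ‖y (n + 1) - w‖ := norm_add_le _ _
            _ = ‖y (n + 1) - y n‖ + ‖y (n + 1) - w‖ := by rw [norm_sub_rev]
        rw [← hdn] at hd2
        linarith
    have hsum : (∑ k ∈ Finset.Icc 1 m, ‖y k - y (k - 1)‖) * (2 * r * ρ - α ^ 2) ≤
        r * (‖y 0 - w‖ ^ 2 - ‖y m - w‖ ^ 2) := by
      rw [Finset.sum_mul]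
      calc ∑ k ∈ Finset.Icc 1 m, ‖y k - y (k - 1)‖ * (2 * r * ρ - α ^ 2)
          ≤ ∑ k ∈ Finset.Icc 1 m, r * (‖y (k - 1) - w‖ ^ 2 - ‖y k - w‖ ^ 2) := by
            apply Finset.sum_le_sum
            intro k hk
            apply hstep k hk
            apply hmono
            rw [Finset.mem_Icc] at hk
            omega
        _ = r * ∑ k ∈ Finset.Icc 1 m, (‖y (k - 1) - w‖ ^ 2 - ‖y k - w‖ ^ 2) := by
            rw [Finset.mul_sum]
        _ = r * (‖y 0 - w‖ ^ 2 - ‖y m - w‖ ^ 2) := by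
            congr 1
            calc ∑ k ∈ Finset.Icc 1 m, (‖y (k - 1) - w‖ ^ 2 - ‖y k - w‖ ^ 2)
                = ∑ j ∈ Finset.range m,
                    (‖y j - w‖ ^ 2 - ‖y (j + 1) - w‖ ^ 2) := by
                  rw [← Finset.Ico_add_one_right_eq_Icc, Finset.sum_Ico_eq_sum_range]
                  apply Finset.sum_congr (by simp)
                  intro j _
                  have h1 : 1 + j - 1 = j := by omega
                  have h2 : 1 + j = j + 1 := by omega
                  rw [h1, h2]
              _ = ‖y 0 - w‖ ^ 2 - ‖y m - w‖ ^ 2 :=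
                  Finset.sum_range_sub' (fun j => ‖y j - w‖ ^ 2) m
    have hρm := hlow m le_rfl
    have hfinal : (∑ k ∈ Finset.Icc 1 m, ‖y k - y (k - 1)‖) * (2 * r * ρ - α ^ 2) ≤
        r * (‖y 0 - w‖ ^ 2 - ρ ^ 2) := by
      have hsq : r * (ρ * ρ) ≤ r * (‖y m - w‖ * ‖y m - w‖) :=
        mul_le_mul_of_nonneg_left (mul_le_mul hρm hρm hρ.le (norm_nonneg _)) hr.le
      nlinarith [hsq]
    refine le_trans ?_ (le_max_left _ _)
    exact (le_div_iff₀ hc).2 hfinal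
  · -- the whole sequence is constant
    have hconst : ∀ k, k ≤ m → y k = y 0 := by
      intro k
      induction k with
      | zero => intro _; rfl
      | succ n ih =>
        intro h
        have ihn := ih (by omega)
        have hmem : n + 1 ∈ Finset.Icc 1 m := by rw [Finset.mem_Icc]; omega
        have hy0ball : y n ∈ Metric.ball w ρ := by
          rw [ihn, mem_ball, dist_eq_norm]
          exact hcase
        have hyC : y n ∈ C (n + 1) := hball (n + 1) hmem hy0ball
        have h0 : Metric.infDist (y n) (C (n + 1)) = 0 := Metric.infDist_zero_of_mem hyC
        have hdn := hdnorm (n + 1) hmem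
        simp only [Nat.add_sub_cancel] at hdn
        rw [h0] at hdn
        have : y (n + 1) = y n := by
          rwa [norm_eq_zero, sub_eq_zero] at hdn
        rw [this, ihn]
    have hzero : ∑ k ∈ Finset.Icc 1 m, ‖y k - y (k - 1)‖ = 0 := by
      apply Finset.sum_eq_zero
      intro k hk
      rw [Finset.mem_Icc] at hk
      rw [hconst k hk.2, hconst (k - 1) (by omega), sub_self, norm_zero]
    rw [hzero]
    exact le_max_right _ _
end

section
/- Weak-star convergence of Stieltjes integrals: let g_n, g, h : [0,T] → H be of bounded variation with h right-continuous, g_n → g uniformly on [0,T], and sup_n V(g_n,[0,T]) < ∞. Then ∫_{[0,T]} ⟨h(t), dDg_n(t)⟩ → ∫_{[0,T]} ⟨h(t), dDg(t)⟩, where Dg denotes the H-valued Lebesgue–Stieltjes (differential) measure of g. -/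
open Metric Set
open scoped RealInnerProductSpace

variable {H : Type*} [NormedAddCommGroup H] [InnerProductSpace ℝ H]

open MeasureTheory

/-- `μ`-density pair `(μ, v)` represents the Lebesgue–Stieltjes (differential) measure of
a function `f : ℝ → H` (extended constantly outside `[0,T]`), characterized by
`Df((c,d]) = f(d+) - f(c+)` for all `c < d`. -/
def IsDiffMeasure (f : ℝ → H) (μ : Measure ℝ) (v : ℝ → H) : Prop :=
  (∀ c d : ℝ, c < d →
    (∫ s in Set.Ioc c d, v s ∂μ) = Function.rightLim f d - Function.rightLim f c)

/-!
Both `v μ` and Mathlib's `BoundedVariationOn.vectorMeasure` of `g` give the mass `g(d+) - g(c+)`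
to every interval `(c, d]`, so they coincide. That vector measure is dominated by the Stieltjes
measure of the variation of `g(·+)`, hence `∫ ‖v‖ dμ ≤ V(g)`. For `h = 1_{[p, ∞)} c` the integral
is `⟪c, Dg([p, ∞))⟫ = ⟪c, g(T) - g(p-)⟫`, which passes to uniform limits; by linearity the
convergence holds for every right-continuous step function. A right-continuous function with left
limits is a uniform limit of such step functions on `[0, T]`, and the approximation error is
uniform in `n` because `∫ ‖v_n‖ dμ_n ≤ V(g_n)` is bounded (as is `V(g) ≤ liminf V(g_n)`).
-/

open Filter Function
open scoped Topology ENNReal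

lemma Filter.tendsto_of_forall_approx {ι α : Type*} [PseudoMetricSpace α] {l : Filter ι}
    {a : ι → α} {A : α}
    (h : ∀ δ > 0, ∃ b : ι → α, ∃ B, Tendsto b l (𝓝 B) ∧ (∀ i, dist (a i) (b i) ≤ δ) ∧
      dist A B ≤ δ) :
    Tendsto a l (𝓝 A) := by
  refine Metric.tendsto_nhds.2 fun ε hε => ?_
  obtain ⟨b, B, hb, hab, hAB⟩ := h (ε / 4) (by positivity)
  filter_upwards [Metric.tendsto_nhds.1 hb (ε / 4) (by positivity)] with i hi
  calc dist (a i) A ≤ dist (a i) (b i) + dist (b i) B + dist B A := dist_triangle4 _ _ _ _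
    _ < ε := by linarith [hab i, dist_comm A B]

lemma TendstoUniformly.tendsto_of_forall_tendsto {ι α E : Type*} [PseudoMetricSpace E]
    {F : ι → α → E} {f : α → E} {l : Filter ι} {l' : Filter α} [l'.NeBot] {L : ι → E} {ℓ : E}
    (h : TendstoUniformly F f l) (hL : ∀ i, Tendsto (F i) l' (𝓝 (L i)))
    (hℓ : Tendsto f l' (𝓝 ℓ)) : Tendsto L l (𝓝 ℓ) := by
  refine Metric.tendsto_nhds.2 fun ε hε => ?_
  filter_upwards [Metric.tendstoUniformly_iff.1 h (ε / 2) (half_pos hε)] with i hi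
  have : dist (L i) ℓ ≤ ε / 2 :=
    le_of_tendsto ((hL i).dist hℓ) (Eventually.of_forall fun x => by
      rw [dist_comm]; exact (hi x).le)
  linarith

lemma eVariationOn_le_of_tendsto {ι α E : Type*} [LinearOrder α] [PseudoEMetricSpace E]
    {F : ι → α → E} {f : α → E} {l : Filter ι} [l.NeBot] {s : Set α} {C : ℝ≥0∞}
    (hf : ∀ x ∈ s, Tendsto (fun i => F i x) l (𝓝 (f x))) (hF : ∀ i, eVariationOn (F i) s ≤ C) :
    eVariationOn f s ≤ C := by
  by_contra! hlt
  obtain ⟨i, hi⟩ := (eVariationOn.lowerSemicontinuous_aux hf hlt).exists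
  exact (hF i).not_gt hi

section ConstantOutside

variable {E : Type*}

def IsConstantOutside (f : ℝ → E) (a b : ℝ) : Prop :=
  ∀ t, (t ≤ a → f t = f a) ∧ (b ≤ t → f t = f b)

namespace IsConstantOutside

variable {f : ℝ → E} {a b : ℝ}

lemma comp_projIcc (hf : IsConstantOutside f a b) (hab : a ≤ b) :
    (fun x => f (projIcc a b hab x)) = f := by
  ext x
  rcases le_total x a with hxa | hax
  · rw [projIcc_of_le_left hab hxa, (hf x).1 hxa]
  rcases le_total b x with hbx | hxb
  · rw [projIcc_of_right_le hab hbx, (hf x).2 hbx]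
  · rw [projIcc_of_mem hab ⟨hax, hxb⟩]

lemma eVariationOn_univ_le [PseudoEMetricSpace E] (hf : IsConstantOutside f a b)
    (hab : a ≤ b) : eVariationOn f univ ≤ eVariationOn f (Icc a b) := by
  have := eVariationOn.comp_le_of_monotoneOn f (fun x => (projIcc a b hab x : ℝ))
    (t := univ) (s := Icc a b) (((Subtype.mono_coe _).comp (monotone_projIcc hab)).monotoneOn _)
    fun x _ => (projIcc a b hab x).2
  rwa [comp_def, hf.comp_projIcc hab] at this

lemma limUnder_atTop [TopologicalSpace E] [T2Space E] [Nonempty E]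
    (hf : IsConstantOutside f a b) : limUnder atTop f = f b :=
  tendsto_const_nhds.congr' (eventually_atTop.2 ⟨b, fun t ht => ((hf t).2 ht).symm⟩)
    |>.limUnder_eq

lemma tendstoUniformly [UniformSpace E] {ι : Type*} {l : Filter ι} {F : ι → ℝ → E}
    (hF : ∀ i, IsConstantOutside (F i) a b) (hf : IsConstantOutside f a b) (hab : a ≤ b)
    (h : TendstoUniformlyOn F f l (Icc a b)) : TendstoUniformly F f l := by
  have := h.comp fun x => (projIcc a b hab x : ℝ)
  simp only [comp_def, (hF _).comp_projIcc hab, hf.comp_projIcc hab] at this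
  have hpre : (fun x => (projIcc a b hab x : ℝ)) ⁻¹' Icc a b = univ :=
    eq_univ_of_forall fun x => (projIcc a b hab x).2
  rwa [hpre, tendstoUniformlyOn_univ] at this

end IsConstantOutside

end ConstantOutside

lemma iUnion_Ioc_neg_natCast : (⋃ n : ℕ, Ioc (-(n : ℝ)) n) = univ := by
  refine eq_univ_of_forall fun x => mem_iUnion.2 ?_
  obtain ⟨n, hn⟩ := exists_nat_ge |x|
  exact ⟨n + 1, by push_cast; constructor <;> linarith [neg_abs_le x, le_abs_self x]⟩

lemma monotone_Ioc_neg_natCast : Monotone fun n : ℕ => Ioc (-(n : ℝ)) n := fun _ _ hmn =>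
  Ioc_subset_Ioc (neg_le_neg (Nat.cast_le.2 hmn)) (Nat.cast_le.2 hmn)

lemma Real.measurableSpace_eq_generateFrom_Ioc :
    Real.measurableSpace = MeasurableSpace.generateFrom {s | ∃ u v, u ≤ v ∧ s = Ioc u v} := by
  rw [Real.measurableSpace, borel_eq_generateFrom_Ioc_le]
  congr 1
  ext s
  exact ⟨fun ⟨u, v, huv, h⟩ => ⟨u, v, huv, h.symm⟩, fun ⟨u, v, huv, h⟩ => ⟨u, v, huv, h.symm⟩⟩

namespace BoundedVariationOn

variable {E : Type*} [NormedAddCommGroup E] [CompleteSpace E] {g : ℝ → E}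

lemma measure_Ioc_stieltjesFunctionRightLim (hg : BoundedVariationOn g univ) (x₀ : ℝ)
    {a b : ℝ} (hab : a ≤ b) :
    (hg.stieltjesFunctionRightLim x₀).measure (Ioc a b) = eVariationOn g.rightLim (Icc a b) := by
  rw [StieltjesFunction.measure_Ioc, stieltjesFunctionRightLim_apply,
    stieltjesFunctionRightLim_apply, ← variationOnFromTo.add hg.rightLim.locallyBoundedVariationOn
      (mem_univ x₀) (mem_univ a) (mem_univ b), add_sub_cancel_left,
    variationOnFromTo.eq_of_le _ _ hab, univ_inter, ENNReal.ofReal_toReal]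
  exact ((eVariationOn.mono _ (subset_univ _)).trans_lt hg.rightLim.lt_top).ne

instance isFiniteMeasure_stieltjesFunctionRightLim (hg : BoundedVariationOn g univ) (x₀ : ℝ) :
    IsFiniteMeasure (hg.stieltjesFunctionRightLim x₀).measure :=
  StieltjesFunction.isFiniteMeasure_of_forall_abs_le _
    fun _ => variationOnFromTo.abs_le_eVariationOn hg.rightLim

lemma eq_vectorMeasure (hg : BoundedVariationOn g univ) {ρ : VectorMeasure ℝ E}
    (hρ : ∀ a b, a ≤ b → ρ (Ioc a b) = g.rightLim b - g.rightLim a) : ρ = hg.vectorMeasure := by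
  have hIoc : ∀ a b, a ≤ b → ρ (Ioc a b) = hg.vectorMeasure (Ioc a b) := fun a b hab => by
    rw [hρ a b hab, hg.vectorMeasure_Ioc hab]
  refine VectorMeasure.ext_of_generateFrom {s | ∃ u v, u ≤ v ∧ s = Ioc u v}
    (by rintro _ ⟨u, v, huv, rfl⟩; exact hIoc u v huv) Real.measurableSpace_eq_generateFrom_Ioc
    IsSetSemiring.Ioc.isPiSystem ?_
  -- both masses of `univ` are limits of the same sequence of masses of intervals
  have key := fun (σ : VectorMeasure ℝ E) => by
    have := σ.tendsto_vectorMeasure_iUnion_atTop_nat monotone_Ioc_neg_natCast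
      (fun _ => measurableSet_Ioc)
    rwa [iUnion_Ioc_neg_natCast] at this
  refine tendsto_nhds_unique (key ρ) ?_
  simp_rw [hIoc _ _ (neg_le_self (Nat.cast_nonneg _))]
  exact key _

lemma enorm_vectorMeasure_le (hg : BoundedVariationOn g univ) (s : Set ℝ) :
    ‖hg.vectorMeasure s‖ₑ ≤ (hg.stieltjesFunctionRightLim 0).measure s := by
  have hIoc : ∀ t ∈ {t | ∃ u v, u ≤ v ∧ t = Ioc u v},
      ‖AddContent.onIoc g.rightLim t‖ₑ ≤ (hg.stieltjesFunctionRightLim 0).measure t := by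
    rintro _ ⟨a, b, hab, rfl⟩
    rw [AddContent.onIoc_apply hab, hg.measure_Ioc_stieltjesFunctionRightLim 0 hab,
      ← edist_eq_enorm_sub]
    exact eVariationOn.edist_le _ ⟨hab, le_rfl⟩ ⟨le_rfl, hab⟩
  obtain ⟨ρ, hρC, hρ⟩ :=
    VectorMeasure.exists_extension_of_isSetSemiring_of_le_measure_of_generateFrom
      IsSetSemiring.Ioc hIoc Real.measurableSpace_eq_generateFrom_Ioc
  rw [← hg.eq_vectorMeasure fun a b hab => ?_]
  · exact hρ s
  rw [hρC _ ⟨a, b, hab, rfl⟩, AddContent.onIoc_apply hab]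

lemma variation_vectorMeasure_le (hg : BoundedVariationOn g univ) :
    hg.vectorMeasure.variation univ ≤ eVariationOn g univ := by
  refine (VectorMeasure.variation_le_of_forall_enorm_le fun s _ =>
    hg.enorm_vectorMeasure_le s) univ |>.trans ?_
  have := tendsto_measure_iUnion_atTop (μ := (hg.stieltjesFunctionRightLim 0).measure)
    monotone_Ioc_neg_natCast
  rw [iUnion_Ioc_neg_natCast] at this
  refine le_of_tendsto' this fun n => ?_
  rw [comp_apply, hg.measure_Ioc_stieltjesFunctionRightLim 0 (neg_le_self (Nat.cast_nonneg _))]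
  exact (eVariationOn.mono _ (subset_univ _)).trans
    (eVariationOn.eVariationOn_rightLim_le isOpen_univ)

end BoundedVariationOn

namespace IsDiffMeasure

variable [CompleteSpace H] {g : ℝ → H} {μ : Measure ℝ} {v : ℝ → H}

lemma withDensityᵥ_eq (hD : IsDiffMeasure g μ v) (hg : BoundedVariationOn g univ)
    (hv : Integrable v μ) : μ.withDensityᵥ v = hg.vectorMeasure :=
  hg.eq_vectorMeasure fun a b hab => by
    rcases hab.eq_or_lt with rfl | hab
    · simp
    · rw [withDensityᵥ_apply hv measurableSet_Ioc]
      exact hD a b hab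

lemma integral_norm_le (hD : IsDiffMeasure g μ v) (hg : BoundedVariationOn g univ)
    (hv : Integrable v μ) : ∫ x, ‖v x‖ ∂μ ≤ (eVariationOn g univ).toReal := by
  have hvar : ∫⁻ x, ‖v x‖ₑ ∂μ = (μ.withDensityᵥ v).variation univ := by
    rw [Measure.variation_withDensityᵥ hv, withDensity_apply _ MeasurableSet.univ,
      Measure.restrict_univ]
  rw [integral_norm_eq_lintegral_enorm hv.1, hvar, hD.withDensityᵥ_eq hg hv]
  exact ENNReal.toReal_mono hg hg.variation_vectorMeasure_le

lemma setIntegral_Ici (hD : IsDiffMeasure g μ v) (hg : BoundedVariationOn g univ)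
    (hv : Integrable v μ) (p : ℝ) :
    ∫ x in Ici p, v x ∂μ = limUnder atTop g - g.leftLim p := by
  rw [← withDensityᵥ_apply hv measurableSet_Ici, hD.withDensityᵥ_eq hg hv, hg.vectorMeasure_Ici]

end IsDiffMeasure

section StepFunctions

variable (E : Type*) [NormedAddCommGroup E] [NormedSpace ℝ E]

def stepFunctions : Submodule ℝ (ℝ → E) :=
  Submodule.span ℝ (range fun q : ℝ × E => (Ici q.1).indicator fun _ => q.2)

variable {E}

lemma indicator_const_mem_stepFunctions (p : ℝ) (c : E) :
    (Ici p).indicator (fun _ => c) ∈ stepFunctions E :=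
  Submodule.subset_span ⟨(p, c), rfl⟩

lemma indicator_mem_stepFunctions {φ : ℝ → E} (hφ : φ ∈ stepFunctions E) (p : ℝ) :
    (Ici p).indicator φ ∈ stepFunctions E := by
  induction hφ using Submodule.span_induction with
  | mem _ h =>
    obtain ⟨⟨q, c⟩, rfl⟩ := h
    rw [indicator_indicator, Ici_inter_Ici]
    exact indicator_const_mem_stepFunctions _ c
  | zero => simp
  | add φ ψ _ _ hφ hψ =>
    rw [indicator_add']
    exact add_mem hφ hψ
  | smul r φ _ hφ =>
    rw [show r • φ = fun x => r • φ x from rfl, indicator_const_smul]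
    exact Submodule.smul_mem _ r hφ

lemma stronglyMeasurable_of_mem_stepFunctions {φ : ℝ → E} (hφ : φ ∈ stepFunctions E) :
    StronglyMeasurable φ := by
  induction hφ using Submodule.span_induction with
  | mem _ h =>
    obtain ⟨⟨q, c⟩, rfl⟩ := h
    exact stronglyMeasurable_const.indicator measurableSet_Ici
  | zero => exact stronglyMeasurable_zero
  | add φ ψ _ _ hφ hψ => exact hφ.add hψ
  | smul r φ _ hφ => exact hφ.const_smul r

variable {μ : Measure ℝ} {v : ℝ → H} {φ : ℝ → H}

lemma integrable_inner_of_mem_stepFunctions (hφ : φ ∈ stepFunctions H) (hv : Integrable v μ) :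
    Integrable (fun x => ⟪φ x, v x⟫) μ := by
  induction hφ using Submodule.span_induction with
  | mem _ h =>
    obtain ⟨⟨q, c⟩, rfl⟩ := h
    have : (fun x => ⟪(Ici q).indicator (fun _ => c) x, v x⟫) =
        (Ici q).indicator fun x => ⟪c, v x⟫ := by
      ext x; by_cases hx : x ∈ Ici q <;> simp [hx]
    rw [this]
    exact (hv.const_inner c).indicator measurableSet_Ici
  | zero => simp
  | add φ ψ _ _ hφ hψ => simpa only [Pi.add_apply, inner_add_left] using hφ.fun_add hψ
  | smul r φ _ hφ => simpa only [Pi.smul_apply, real_inner_smul_left] using hφ.const_mul r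

lemma tendsto_integral_inner_of_mem_stepFunctions [CompleteSpace H] {ι : Type*} {l : Filter ι}
    {μs : ι → Measure ℝ} {vs : ι → ℝ → H} (hvs : ∀ i, Integrable (vs i) (μs i))
    (hv : Integrable v μ)
    (hIci : ∀ p, Tendsto (fun i => ∫ x in Ici p, vs i x ∂μs i) l (𝓝 (∫ x in Ici p, v x ∂μ)))
    (hφ : φ ∈ stepFunctions H) :
    Tendsto (fun i => ∫ x, ⟪φ x, vs i x⟫ ∂μs i) l (𝓝 (∫ x, ⟪φ x, v x⟫ ∂μ)) := by
  induction hφ using Submodule.span_induction with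
  | mem _ h =>
    obtain ⟨⟨q, c⟩, rfl⟩ := h
    have key : ∀ (ν : Measure ℝ) (w : ℝ → H), Integrable w ν →
        ∫ x, ⟪(Ici q).indicator (fun _ => c) x, w x⟫ ∂ν = ⟪c, ∫ x in Ici q, w x ∂ν⟫ := by
      intro ν w hw
      have : (fun x => ⟪(Ici q).indicator (fun _ => c) x, w x⟫) =
          (Ici q).indicator fun x => ⟪c, w x⟫ := by
        ext x; by_cases hx : x ∈ Ici q <;> simp [hx]
      rw [this, integral_indicator measurableSet_Ici, integral_inner hw.integrableOn]
    simp only [key _ _ (hvs _), key _ _ hv]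
    exact tendsto_const_nhds.inner (hIci q)
  | zero => simpa using tendsto_const_nhds
  | add φ ψ hφ hψ ihφ ihψ =>
    simp only [Pi.add_apply, inner_add_left]
    rw [integral_add (integrable_inner_of_mem_stepFunctions hφ hv)
      (integrable_inner_of_mem_stepFunctions hψ hv)]
    refine (ihφ.add ihψ).congr fun i => ?_
    rw [integral_add (integrable_inner_of_mem_stepFunctions hφ (hvs i))
      (integrable_inner_of_mem_stepFunctions hψ (hvs i))]
  | smul r φ _ ihφ =>
    simp only [Pi.smul_apply, real_inner_smul_left, integral_const_mul]
    exact ihφ.const_mul r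

end StepFunctions

section Approximation

variable {E : Type*} [NormedAddCommGroup E] [NormedSpace ℝ E]

lemma exists_mem_stepFunctions_of_tendsto_nhdsLT {h : ℝ → E} {L : E} {a t ε : ℝ} (hat : a < t)
    (hL : Tendsto h (𝓝[<] t) (𝓝 L)) (hε : 0 < ε)
    (hG : ∀ c ∈ Ico a t, ∃ φ ∈ stepFunctions E, ∀ x ∈ Icc a c, ‖h x - φ x‖ ≤ ε) :
    ∃ φ ∈ stepFunctions E, (∀ x ∈ Ico a t, ‖h x - φ x‖ ≤ ε) ∧ ∀ x, t ≤ x → φ x = h t := by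
  obtain ⟨p₀, hp₀, hp₀L⟩ := mem_nhdsLT_iff_exists_Ioo_subset.1
    (hL (Metric.closedBall_mem_nhds L hε))
  obtain ⟨p, hp, hpt⟩ := exists_between (max_lt hp₀ hat)
  obtain ⟨φ, hφ, hφp⟩ := hG p ⟨(le_max_right _ _).trans hp.le, hpt⟩
  -- keep `φ` before `p`, then take the value `L` on `[p, t)` and `h t` from `t` on
  refine ⟨φ - (Ici p).indicator φ + (Ici p).indicator (fun _ => L) +
      (Ici t).indicator (fun _ => h t - L),
    add_mem (add_mem (sub_mem hφ (indicator_mem_stepFunctions hφ p))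
      (indicator_const_mem_stepFunctions p L)) (indicator_const_mem_stepFunctions t _),
    fun x hx => ?_, fun x hx => ?_⟩
  · rcases lt_or_ge x p with hxp | hpx
    · simpa [hxp.not_ge, hx.2.not_ge] using hφp x ⟨hx.1, hxp.le⟩
    · have := hp₀L ⟨(le_max_left _ _).trans_lt (hp.trans_le hpx), hx.2⟩
      simpa [hpx, hx.2.not_ge, ← dist_eq_norm] using this
  · simp [hx, hpt.le.trans hx]

theorem exists_mem_stepFunctions_norm_sub_le {h : ℝ → E} {a b : ℝ}
    (hrc : ∀ t ∈ Ico a b, ContinuousWithinAt h (Ici t) t)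
    (hleft : ∀ t ∈ Ioc a b, ∃ L, Tendsto h (𝓝[<] t) (𝓝 L)) {ε : ℝ} (hε : 0 < ε) :
    ∃ φ ∈ stepFunctions E, ∀ x ∈ Icc a b, ‖h x - φ x‖ ≤ ε := by
  rcases lt_or_ge b a with hba | hab
  · exact ⟨0, zero_mem _, fun x hx => absurd (hx.1.trans hx.2) hba.not_ge⟩
  set G := {c | ∃ φ ∈ stepFunctions E, ∀ x ∈ Icc a c, ‖h x - φ x‖ ≤ ε}
  have hstep : ∀ t ∈ Icc a b, Ico a t ⊆ G → ∃ φ ∈ stepFunctions E,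
      (∀ x ∈ Ico a t, ‖h x - φ x‖ ≤ ε) ∧ ∀ x, t ≤ x → φ x = h t := by
    intro t ht hG
    rcases ht.1.eq_or_lt with rfl | hat
    · exact ⟨_, indicator_const_mem_stepFunctions a (h a), fun x hx => absurd hx.2 hx.1.not_gt,
        fun x hx => indicator_of_mem hx _⟩
    obtain ⟨L, hL⟩ := hleft t ⟨hat, ht.2⟩
    exact exists_mem_stepFunctions_of_tendsto_nhdsLT hat hL hε hG
  have hstep_mem : ∀ t ∈ Icc a b, Ico a t ⊆ G → t ∈ G := fun t ht hG => by
    obtain ⟨φ, hφ, hφt, hφh⟩ := hstep t ht hG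
    refine ⟨φ, hφ, fun x hx => ?_⟩
    rcases hx.2.lt_or_eq with hxt | rfl
    · exact hφt x ⟨hx.1, hxt⟩
    · simp [hφh x le_rfl, hε.le]
  -- the supremum of the good points of `[a, b]` is good, and right-continuity shows it is `b`
  have ha : a ∈ G ∩ Icc a b := ⟨hstep_mem a ⟨le_rfl, hab⟩ (by simp), le_rfl, hab⟩
  have hbdd : BddAbove (G ∩ Icc a b) := ⟨b, fun _ hc => hc.2.2⟩
  set s := sSup (G ∩ Icc a b)
  have hs : s ∈ Icc a b := ⟨le_csSup hbdd ha, csSup_le ⟨a, ha⟩ fun _ hc => hc.2.2⟩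
  have hIco : Ico a s ⊆ G := fun x hx => by
    obtain ⟨c, ⟨⟨φ, hφ, hφc⟩, -⟩, hxc⟩ := exists_lt_of_lt_csSup ⟨a, ha⟩ hx.2
    exact ⟨φ, hφ, fun y hy => hφc y ⟨hy.1, hy.2.trans hxc.le⟩⟩
  suffices hbG : b ∈ G by simpa [G] using hbG
  rcases hs.2.lt_or_eq with hsb | hsb
  · obtain ⟨φ, hφ, hφs, hφh⟩ := hstep s hs hIco
    obtain ⟨c, hsc, hc⟩ := mem_nhdsGE_iff_exists_Ico_subset.1
      (hrc s ⟨hs.1, hsb⟩ (Metric.closedBall_mem_nhds (h s) hε))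
    have hsc' : s < (s + c) / 2 := by linarith [mem_Ioi.1 hsc]
    have hc' : min ((s + c) / 2) b ∈ G := ⟨φ, hφ, fun x hx => by
      rcases lt_or_ge x s with hxs | hsx
      · exact hφs x ⟨hx.1, hxs⟩
      · rw [hφh x hsx, ← dist_eq_norm]
        exact hc ⟨hsx, hx.2.trans_lt ((min_le_left _ _).trans_lt (by linarith [mem_Ioi.1 hsc]))⟩⟩
    have := le_csSup hbdd ⟨hc', hs.1.trans (le_min hsc'.le hsb.le), min_le_right _ _⟩
    exact absurd this (not_le.2 (lt_min hsc' hsb))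
  · exact hsb ▸ hstep_mem s hs hIco

end Approximation

lemma aestronglyMeasurable_of_forall_exists_mem_stepFunctions {E : Type*} [NormedAddCommGroup E]
    [NormedSpace ℝ E] {h : ℝ → E} {s : Set ℝ} {μ : Measure ℝ} (hs : ∀ᵐ x ∂μ, x ∈ s)
    (happrox : ∀ ε > 0, ∃ φ ∈ stepFunctions E, ∀ x ∈ s, ‖h x - φ x‖ ≤ ε) :
    AEStronglyMeasurable h μ := by
  choose φ hφ hφh using fun n : ℕ => happrox (1 / (n + 1)) Nat.one_div_pos_of_nat
  refine aestronglyMeasurable_of_tendsto_ae atTop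
    (fun n => (stronglyMeasurable_of_mem_stepFunctions (hφ n)).aestronglyMeasurable) ?_
  filter_upwards [hs] with x hx
  refine tendsto_iff_norm_sub_tendsto_zero.2 <| squeeze_zero (fun _ => norm_nonneg _)
    (fun n => ?_) tendsto_one_div_add_atTop_nhds_zero_nat
  rw [norm_sub_rev]
  exact hφh n x hx

lemma dist_integral_inner_le {μ : Measure ℝ} {v h φ : ℝ → H} {η : ℝ} (hv : Integrable v μ)
    (hh : AEStronglyMeasurable h μ) (hφ : AEStronglyMeasurable φ μ)
    (hφv : Integrable (fun x => ⟪φ x, v x⟫) μ) (hclose : ∀ᵐ x ∂μ, ‖h x - φ x‖ ≤ η) :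
    dist (∫ x, ⟪h x, v x⟫ ∂μ) (∫ x, ⟪φ x, v x⟫ ∂μ) ≤ η * ∫ x, ‖v x‖ ∂μ := by
  have hbound : ∀ᵐ x ∂μ, ‖⟪h x - φ x, v x⟫‖ ≤ η * ‖v x‖ := by
    filter_upwards [hclose] with x hx
    exact (norm_inner_le_norm _ _).trans (mul_le_mul_of_nonneg_right hx (norm_nonneg _))
  have hdiff : Integrable (fun x => ⟪h x - φ x, v x⟫) μ :=
    (hv.norm.const_mul η).mono' ((hh.sub hφ).inner hv.1) hbound
  have hsplit : ∫ x, ⟪h x, v x⟫ ∂μ = ∫ x, ⟪h x - φ x, v x⟫ ∂μ + ∫ x, ⟪φ x, v x⟫ ∂μ := by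
    rw [← integral_add hdiff hφv]
    simp only [← inner_add_left, sub_add_cancel]
  rw [hsplit, dist_eq_norm, add_sub_cancel_right, ← integral_const_mul]
  exact norm_integral_le_of_norm_le (hv.norm.const_mul η) hbound

theorem tendsto_integral_inner_of_tendsto_setIntegral_Ici [CompleteSpace H] {ι : Type*}
    {l : Filter ι} {μs : ι → Measure ℝ} {vs : ι → ℝ → H} {μ : Measure ℝ} {v h : ℝ → H}
    {s : Set ℝ} {C : ℝ} (hvs : ∀ i, Integrable (vs i) (μs i)) (hv : Integrable v μ)
    (hIci : ∀ p, Tendsto (fun i => ∫ x in Ici p, vs i x ∂μs i) l (𝓝 (∫ x in Ici p, v x ∂μ)))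
    (hCs : ∀ i, ∫ x, ‖vs i x‖ ∂μs i ≤ C) (hC : ∫ x, ‖v x‖ ∂μ ≤ C)
    (hs : ∀ i, ∀ᵐ x ∂μs i, x ∈ s) (hs' : ∀ᵐ x ∂μ, x ∈ s)
    (happrox : ∀ ε > 0, ∃ φ ∈ stepFunctions H, ∀ x ∈ s, ‖h x - φ x‖ ≤ ε) :
    Tendsto (fun i => ∫ x, ⟪h x, vs i x⟫ ∂μs i) l (𝓝 (∫ x, ⟪h x, v x⟫ ∂μ)) := by
  refine tendsto_of_forall_approx fun δ hδ => ?_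
  have hC0 : 0 ≤ C := (integral_nonneg fun _ => norm_nonneg _).trans hC
  obtain ⟨φ, hφ, hφh⟩ := happrox (δ / (C + 1)) (by positivity)
  have herr : ∀ (ν : Measure ℝ) (w : ℝ → H), Integrable w ν → ∫ x, ‖w x‖ ∂ν ≤ C →
      (∀ᵐ x ∂ν, x ∈ s) → dist (∫ x, ⟪h x, w x⟫ ∂ν) (∫ x, ⟪φ x, w x⟫ ∂ν) ≤ δ := by
    intro ν w hw hwC hνs
    calc _ ≤ δ / (C + 1) * ∫ x, ‖w x‖ ∂ν :=
          dist_integral_inner_le hw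
            (aestronglyMeasurable_of_forall_exists_mem_stepFunctions hνs happrox)
            (stronglyMeasurable_of_mem_stepFunctions hφ).aestronglyMeasurable
            (integrable_inner_of_mem_stepFunctions hφ hw) (hνs.mono hφh)
      _ ≤ δ / (C + 1) * (C + 1) := by gcongr; linarith
      _ = δ := div_mul_cancel₀ _ (by positivity)
  exact ⟨_, _, tendsto_integral_inner_of_mem_stepFunctions hvs hv hIci hφ,
    fun i => herr _ _ (hvs i) (hCs i) (hs i), herr _ _ hv hC hs'⟩

theorem stmt_14_general [CompleteSpace H] (T : ℝ) (hT : 0 < T)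
    (g : ℕ → ℝ → H) (glim h : ℝ → H)
    -- all functions are extended constantly outside `[0,T]`
    (hgext : ∀ n, ∀ t : ℝ, (t ≤ 0 → g n t = g n 0) ∧ (T ≤ t → g n t = g n T))
    (hglimext : ∀ t : ℝ, (t ≤ 0 → glim t = glim 0) ∧ (T ≤ t → glim t = glim T))
    (hhext : ∀ t : ℝ, (t ≤ 0 → h t = h 0) ∧ (T ≤ t → h t = h T))
    -- bounded variation
    (hhBV : BoundedVariationOn h (Set.Icc 0 T))
    -- `h` is right-continuous
    (hrc : ∀ t ∈ Set.Ico (0 : ℝ) T, ContinuousWithinAt h (Set.Ici t) t)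
    -- uniform convergence
    (hunif : TendstoUniformlyOn g glim Filter.atTop (Set.Icc 0 T))
    -- uniformly bounded variations
    (hsupV : ∃ V : ℝ, ∀ n, eVariationOn (g n) (Set.Icc 0 T) ≤ ENNReal.ofReal V)
    -- differential measures `Dg_n = v_n μ_n`, `Dglim = v μ`
    (μn : ℕ → Measure ℝ) (vn : ℕ → ℝ → H) (μ : Measure ℝ) (v : ℝ → H)
    (hμnconc : ∀ n, (μn n) (Set.Icc (0 : ℝ) T)ᶜ = 0)
    (hμconc : μ (Set.Icc (0 : ℝ) T)ᶜ = 0)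
    (hvn : ∀ n, Integrable (vn n) (μn n)) (hv : Integrable v μ)
    (hDgn : ∀ n, IsDiffMeasure (g n) (μn n) (vn n))
    (hDg : IsDiffMeasure glim μ v) :
    Filter.Tendsto
      (fun n => ∫ t in Set.Icc (0 : ℝ) T, (inner ℝ (h t) (vn n t) : ℝ) ∂(μn n))
      Filter.atTop
      (nhds (∫ t in Set.Icc (0 : ℝ) T, (inner ℝ (h t) (v t) : ℝ) ∂μ)) := by
  obtain ⟨V, hV⟩ := hsupV
  have hVn : ∀ n, eVariationOn (g n) univ ≤ .ofReal V :=
    fun n => (IsConstantOutside.eVariationOn_univ_le (hgext n) hT.le).trans (hV n)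
  have hunif_univ := IsConstantOutside.tendstoUniformly hgext hglimext hT.le hunif
  have hVlim : eVariationOn glim univ ≤ .ofReal V :=
    eVariationOn_le_of_tendsto (fun x _ => hunif_univ.tendsto_at x) hVn
  have hgBV : ∀ n, BoundedVariationOn (g n) univ :=
    fun n => ne_top_of_le_ne_top ENNReal.ofReal_ne_top (hVn n)
  have hglimBV : BoundedVariationOn glim univ := ne_top_of_le_ne_top ENNReal.ofReal_ne_top hVlim
  have hhBVuniv : BoundedVariationOn h univ :=
    ne_top_of_le_ne_top hhBV (IsConstantOutside.eVariationOn_univ_le hhext hT.le)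
  have hae : ∀ ν : Measure ℝ, ν (Icc 0 T)ᶜ = 0 → ∀ᵐ x ∂ν, x ∈ Icc 0 T := fun ν hν =>
    measure_eq_zero_iff_ae_notMem.1 hν |>.mono fun x hx => by simpa using hx
  simp only [Measure.restrict_eq_self_of_ae_mem (hae _ (hμnconc _)),
    Measure.restrict_eq_self_of_ae_mem (hae _ hμconc)]
  refine tendsto_integral_inner_of_tendsto_setIntegral_Ici (C := (ENNReal.ofReal V).toReal) hvn hv
    (fun p => ?_) (fun n => ((hDgn n).integral_norm_le (hgBV n) (hvn n)).trans
      (ENNReal.toReal_mono ENNReal.ofReal_ne_top (hVn n)))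
    ((hDg.integral_norm_le hglimBV hv).trans (ENNReal.toReal_mono ENNReal.ofReal_ne_top hVlim))
    (fun n => hae _ (hμnconc n)) (hae _ hμconc)
    (fun _ => exists_mem_stepFunctions_norm_sub_le hrc fun t _ => ⟨_, hhBVuniv.tendsto_leftLim t⟩)
  simp only [(hDgn _).setIntegral_Ici (hgBV _) (hvn _), hDg.setIntegral_Ici hglimBV hv,
    IsConstantOutside.limUnder_atTop (hgext _), IsConstantOutside.limUnder_atTop hglimext]
  exact (hunif_univ.tendsto_at T).sub (hunif_univ.tendsto_of_forall_tendsto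
    (fun n => (hgBV n).tendsto_leftLim p) (hglimBV.tendsto_leftLim p))

theorem stmt_14 [CompleteSpace H] (T : ℝ) (hT : 0 < T)
    (g : ℕ → ℝ → H) (glim h : ℝ → H)
    -- all functions are extended constantly outside `[0,T]`
    (hgext : ∀ n, ∀ t : ℝ, (t ≤ 0 → g n t = g n 0) ∧ (T ≤ t → g n t = g n T))
    (hglimext : ∀ t : ℝ, (t ≤ 0 → glim t = glim 0) ∧ (T ≤ t → glim t = glim T))
    (hhext : ∀ t : ℝ, (t ≤ 0 → h t = h 0) ∧ (T ≤ t → h t = h T))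
    -- bounded variation
    (hgBV : ∀ n, BoundedVariationOn (g n) (Set.Icc 0 T))
    (hglimBV : BoundedVariationOn glim (Set.Icc 0 T))
    (hhBV : BoundedVariationOn h (Set.Icc 0 T))
    -- `h` is right-continuous
    (hrc : ∀ t ∈ Set.Ico (0 : ℝ) T, ContinuousWithinAt h (Set.Ici t) t)
    -- uniform convergence
    (hunif : TendstoUniformlyOn g glim Filter.atTop (Set.Icc 0 T))
    -- uniformly bounded variations
    (hsupV : ∃ V : ℝ, ∀ n, eVariationOn (g n) (Set.Icc 0 T) ≤ ENNReal.ofReal V)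
    -- differential measures `Dg_n = v_n μ_n`, `Dglim = v μ`
    (μn : ℕ → Measure ℝ) (vn : ℕ → ℝ → H) (μ : Measure ℝ) (v : ℝ → H)
    (hμn : ∀ n, IsFiniteMeasure (μn n)) (hμ : IsFiniteMeasure μ)
    (hμnconc : ∀ n, (μn n) (Set.Icc (0 : ℝ) T)ᶜ = 0)
    (hμconc : μ (Set.Icc (0 : ℝ) T)ᶜ = 0)
    (hvn : ∀ n, Integrable (vn n) (μn n)) (hv : Integrable v μ)
    (hDgn : ∀ n, IsDiffMeasure (g n) (μn n) (vn n))
    (hDg : IsDiffMeasure glim μ v) :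
    Filter.Tendsto
      (fun n => ∫ t in Set.Icc (0 : ℝ) T, (inner ℝ (h t) (vn n t) : ℝ) ∂(μn n))
      Filter.atTop
      (nhds (∫ t in Set.Icc (0 : ℝ) T, (inner ℝ (h t) (v t) : ℝ) ∂μ)) :=
  stmt_14_general T hT g glim h hgext hglimext hhext hhBV hrc hunif hsupV μn vn μ v hμnconc hμconc
    hvn hv hDgn hDg
end
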